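/- arXiv:2509.15016 — 6 statements merged into one kernel-verified Lean document; each statement's English description precedes it below -/
import Mathlib

section
/- Let (E,d) be a complete metric space that is Busemann convex with respect to a distinguished class 𝒢 of geodesics. For every geodesic ray ψ ∈ 𝒢 and every point a ∈ E there exists a unique geodesic ray φ ∈ 𝒢 with φ(0) = a that is parallel to ψ; moreover φ has the same speed as ψ. -/
open Filter Set

variable {E : Type*} [MetricSpace E]

/-- `f` restricted to `I` is a constant-speed geodesic: there is `c ≥ 0` with
`d(f s, f t) = c·|s − t|` for all `s, t ∈ I`. -/
def IsGeodesicOn (f : ℝ → E) (I : Set ℝ) : Prop :=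
  ∃ c : ℝ, 0 ≤ c ∧ ∀ s ∈ I, ∀ t ∈ I, dist (f s) (f t) = c * |s - t|

/-- `f` restricted to `I` is a geodesic of speed `c`. -/
def HasSpeedOn (f : ℝ → E) (I : Set ℝ) (c : ℝ) : Prop :=
  ∀ s ∈ I, ∀ t ∈ I, dist (f s) (f t) = c * |s - t|

/-- A distinguished class of geodesics in a metric space: a class of geodesics
(each given by a map `ℝ → E` together with its domain `I ⊆ ℝ`) that is closed
under affine reparametrization and pointwise limits, and such that membership
can be tested on compact subintervals. -/
structure DistinguishedClass (E : Type*) [MetricSpace E] where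
  Mem : (ℝ → E) → Set ℝ → Prop
  geodesic : ∀ {f : ℝ → E} {I : Set ℝ}, Mem f I → IsGeodesicOn f I
  affine : ∀ (a b : ℝ) {f : ℝ → E} {I : Set ℝ}, Mem f I →
    Mem (fun t => f (a * t + b)) {t : ℝ | a * t + b ∈ I}
  plim : ∀ {I : Set ℝ} (f : ℕ → ℝ → E) (g : ℝ → E),
    (∀ n, Mem (f n) I) → IsGeodesicOn g I →
    (∀ t ∈ I, Tendsto (fun n => f n t) atTop (nhds (g t))) →
    Mem g I
  restrict_iff : ∀ {f : ℝ → E} {I : Set ℝ}, IsGeodesicOn f I →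
    (Mem f I ↔ ∀ a b : ℝ, Set.Icc a b ⊆ I → Mem f (Set.Icc a b))

/-- `(E,d)` is Busemann convex with respect to the distinguished class `𝒢`:
any two points are joined by a geodesic segment (parametrized on `[0,1]`)
belonging to `𝒢`, and `t ↦ d(φ t, ψ t)` is convex for every pair of geodesics
of `𝒢` defined on the same interval. -/
def BusemannConvex (𝒢 : DistinguishedClass E) : Prop :=
  (∀ a b : E, ∃ f : ℝ → E, 𝒢.Mem f (Set.Icc 0 1) ∧ f 0 = a ∧ f 1 = b) ∧
  (∀ (f g : ℝ → E) (I : Set ℝ), Convex ℝ I → 𝒢.Mem f I → 𝒢.Mem g I →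
    ConvexOn ℝ I (fun t => dist (f t) (g t)))

/-- Two geodesic rays are parallel if they stay at bounded distance. -/
def ParallelRays (f g : ℝ → E) : Prop :=
  ∃ M : ℝ, ∀ t : ℝ, 0 ≤ t → dist (f t) (g t) ≤ M

private lemma mem_Icc_of_mem {E : Type*} [MetricSpace E] {𝒢 : DistinguishedClass E}
    {f : ℝ → E} {I : Set ℝ} (h : 𝒢.Mem f I) {a b : ℝ} (hsub : Set.Icc a b ⊆ I) :
    𝒢.Mem f (Set.Icc a b) :=
  ((𝒢.restrict_iff (𝒢.geodesic h)).mp h) a b hsub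

private lemma convexOn_bound {g : ℝ → ℝ} {I : Set ℝ} (hg : ConvexOn ℝ I g)
    {s t : ℝ} (h0 : (0:ℝ) ∈ I) (hs : s ∈ I) (ht0 : 0 ≤ t) (hts : t ≤ s) (hspos : 0 < s) :
    g t ≤ (1 - t/s) * g 0 + (t/s) * g s := by
  have h1 : 0 ≤ 1 - t/s := sub_nonneg.2 ((div_le_one hspos).2 hts)
  have h2 : 0 ≤ t/s := div_nonneg ht0 hspos.le
  have h3 : (1 - t/s) + t/s = 1 := by ring
  have hkey := hg.2 h0 hs h1 h2 h3
  have ht : (1 - t/s) • (0:ℝ) + (t/s) • s = t := by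
    simp only [smul_eq_mul]
    field_simp
    ring
  rw [ht] at hkey
  simpa using hkey

/-- In a complete Busemann convex space, for every geodesic ray
`ψ ∈ 𝒢` and every point `a ∈ E` there is a unique geodesic ray `φ ∈ 𝒢` with
`φ(0) = a` parallel to `ψ`; moreover `φ` has the same speed as `ψ`. -/
theorem parallel_ray_exists_unique [CompleteSpace E]
    (𝒢 : DistinguishedClass E) (hB : BusemannConvex 𝒢)
    (ψ : ℝ → E) (hψ : 𝒢.Mem ψ (Set.Ici 0))
    (c : ℝ) (hc : 0 ≤ c) (hspeed : HasSpeedOn ψ (Set.Ici 0) c)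
    (a : E) :
    ∃ φ : ℝ → E,
      (𝒢.Mem φ (Set.Ici 0) ∧ φ 0 = a ∧ ParallelRays φ ψ ∧
        HasSpeedOn φ (Set.Ici 0) c) ∧
      ∀ φ' : ℝ → E, 𝒢.Mem φ' (Set.Ici 0) → φ' 0 = a → ParallelRays φ' ψ →
        ∀ t ∈ Set.Ici (0:ℝ), φ' t = φ t := by
  classical
  have : Nonempty E := ⟨a⟩
  -- geodesic segments from a to ψ n
  choose σ hσmem hσ0 hσ1 using fun n : ℕ => hB.1 a (ψ n)
  set D := dist a (ψ 0) with hD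
  have hD0 : 0 ≤ D := dist_nonneg
  set Φ : ℕ → ℝ → E := fun n t => σ n (t / n) with hΦdef
  have hΦ0 : ∀ n, Φ n 0 = a := by
    intro n; simp only [hΦdef, zero_div]; exact hσ0 n
  -- speed of the segments
  have hσspeed : ∀ n : ℕ, ∀ s ∈ Set.Icc (0:ℝ) 1, ∀ t ∈ Set.Icc (0:ℝ) 1,
      dist (σ n s) (σ n t) = dist a (ψ n) * |s - t| := by
    intro n
    obtain ⟨cn, hcn0, hcn⟩ := 𝒢.geodesic (hσmem n)
    have h01 : dist (σ n 0) (σ n 1) = cn * |0 - 1| := hcn 0 (by norm_num) 1 (by norm_num)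
    rw [hσ0, hσ1] at h01
    norm_num at h01
    intro s hs t ht
    rw [hcn s hs t ht, h01]
  have hΦspeed : ∀ n : ℕ, 0 < n → HasSpeedOn (Φ n) (Set.Icc 0 (n:ℝ)) (dist a (ψ n) / n) := by
    intro n hn s hs t ht
    have hnpos : (0:ℝ) < n := Nat.cast_pos.2 hn
    have hs' : s / n ∈ Set.Icc (0:ℝ) 1 := ⟨div_nonneg hs.1 hnpos.le, (div_le_one hnpos).2 hs.2⟩
    have ht' : t / n ∈ Set.Icc (0:ℝ) 1 := ⟨div_nonneg ht.1 hnpos.le, (div_le_one hnpos).2 ht.2⟩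
    have h := hσspeed n _ hs' _ ht'
    simp only [hΦdef]
    rw [h, div_sub_div_same, abs_div, abs_of_nonneg hnpos.le]
    ring
  have hΦmem : ∀ n : ℕ, 0 < n → 𝒢.Mem (Φ n) (Set.Icc 0 (n:ℝ)) := by
    intro n hn
    have hnpos : (0:ℝ) < n := Nat.cast_pos.2 hn
    have h := 𝒢.affine (1/(n:ℝ)) 0 (hσmem n)
    have hfun : (fun t => σ n ((1/(n:ℝ)) * t + 0)) = Φ n := by
      funext t; simp only [hΦdef, add_zero, one_div, inv_mul_eq_div]
    have hset : {t : ℝ | (1/(n:ℝ)) * t + 0 ∈ Set.Icc 0 1} = Set.Icc 0 (n:ℝ) := by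
      ext t
      simp only [Set.mem_setOf_eq, Set.mem_Icc, add_zero, one_div, inv_mul_eq_div]
      rw [div_le_one hnpos, le_div_iff₀ hnpos, zero_mul]
    rw [hfun, hset] at h
    exact h
  -- estimate 1 : dist (Φ m t) (ψ t) ≤ (1 - t/m) * D
  have hest1 : ∀ m : ℕ, 0 < m → ∀ t : ℝ, 0 ≤ t → t ≤ (m:ℝ) →
      dist (Φ m t) (ψ t) ≤ (1 - t/m) * D := by
    intro m hm t ht0 htm
    have hmpos : (0:ℝ) < m := Nat.cast_pos.2 hm
    have hψm : 𝒢.Mem ψ (Set.Icc 0 (m:ℝ)) :=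
      mem_Icc_of_mem hψ (fun x hx => hx.1)
    have hconv := hB.2 (Φ m) ψ _ (convex_Icc _ _) (hΦmem m hm) hψm
    have h0 : (0:ℝ) ∈ Set.Icc (0:ℝ) (m:ℝ) := ⟨le_rfl, hmpos.le⟩
    have hmmem : (m:ℝ) ∈ Set.Icc (0:ℝ) (m:ℝ) := ⟨hmpos.le, le_rfl⟩
    have hb := convexOn_bound hconv h0 hmmem ht0 htm hmpos
    have hΦmm : Φ m (m:ℝ) = ψ m := by
      simp only [hΦdef]; rw [div_self hmpos.ne']; exact hσ1 m
    rw [hΦ0 m, hΦmm, dist_self] at hb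
    simpa [← hD] using hb
  -- estimate 2 : Cauchy estimate
  have hest2 : ∀ n m : ℕ, 0 < n → n ≤ m → ∀ t : ℝ, 0 ≤ t → t ≤ (n:ℝ) →
      dist (Φ n t) (Φ m t) ≤ t / n * D := by
    intro n m hn hnm t ht0 htn
    have hnpos : (0:ℝ) < n := Nat.cast_pos.2 hn
    have hm : 0 < m := lt_of_lt_of_le hn hnm
    have hnm' : (n:ℝ) ≤ m := Nat.cast_le.2 hnm
    have hΦmn : 𝒢.Mem (Φ m) (Set.Icc 0 (n:ℝ)) :=
      mem_Icc_of_mem (hΦmem m hm) (Set.Icc_subset_Icc le_rfl hnm')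
    have hconv := hB.2 (Φ n) (Φ m) _ (convex_Icc _ _) (hΦmem n hn) hΦmn
    have h0 : (0:ℝ) ∈ Set.Icc (0:ℝ) (n:ℝ) := ⟨le_rfl, hnpos.le⟩
    have hnmem : (n:ℝ) ∈ Set.Icc (0:ℝ) (n:ℝ) := ⟨hnpos.le, le_rfl⟩
    have hb := convexOn_bound hconv h0 hnmem ht0 htn hnpos
    have hΦnn : Φ n (n:ℝ) = ψ n := by
      simp only [hΦdef]; rw [div_self hnpos.ne']; exact hσ1 n
    have hend : dist (Φ n (n:ℝ)) (Φ m (n:ℝ)) ≤ D := by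
      rw [hΦnn, dist_comm]
      have h1 := hest1 m hm (n:ℝ) hnpos.le hnm'
      have h2 : 0 ≤ (n:ℝ)/m := div_nonneg hnpos.le (Nat.cast_nonneg m)
      nlinarith
    rw [hΦ0 n, hΦ0 m, dist_self] at hb
    have hq : 0 ≤ t / (n:ℝ) := div_nonneg ht0 hnpos.le
    calc dist (Φ n t) (Φ m t)
        ≤ (1 - t/n) * 0 + (t/n) * dist (Φ n (n:ℝ)) (Φ m (n:ℝ)) := hb
      _ = (t/n) * dist (Φ n (n:ℝ)) (Φ m (n:ℝ)) := by ring
      _ ≤ (t/n) * D := mul_le_mul_of_nonneg_left hend hq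
      _ = t / n * D := rfl
  -- convergence
  have hlim : ∀ t : ℝ, 0 ≤ t → ∃ x : E, Tendsto (fun n => Φ n t) atTop (nhds x) := by
    intro t ht
    apply cauchySeq_tendsto_of_complete
    rw [Metric.cauchySeq_iff]
    intro ε hε
    obtain ⟨N, hN⟩ := exists_nat_gt (max (max 1 t) (t * D / ε))
    have key : ∀ p q : ℕ, N ≤ p → p ≤ q → dist (Φ p t) (Φ q t) < ε := by
      intro p q hp hpq
      have hNp : (N:ℝ) ≤ p := Nat.cast_le.2 hp
      have h1N : (1:ℝ) < N :=
        lt_of_le_of_lt (le_max_left _ _) (lt_of_le_of_lt (le_max_left _ _) hN)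
      have hppos' : (0:ℝ) < p := lt_of_lt_of_le (lt_trans one_pos h1N) hNp
      have hppos : 0 < p := Nat.cast_pos.mp hppos'
      have htp : t ≤ (p:ℝ) :=
        le_trans (le_of_lt (lt_of_le_of_lt (le_max_right 1 t)
          (lt_of_le_of_lt (le_max_left _ _) hN))) hNp
      have h3 : t * D / ε < p :=
        lt_of_lt_of_le (lt_of_le_of_lt (le_max_right _ _) hN) hNp
      have h4 : t * D < ε * p := by
        rw [div_lt_iff₀ hε] at h3
        linarith
      calc dist (Φ p t) (Φ q t) ≤ t / p * D := hest2 p q hppos hpq t ht htp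
        _ = t * D / p := by ring
        _ < ε := (div_lt_iff₀ hppos').2 (by linarith)
    refine ⟨N, fun m hm n hn => ?_⟩
    rcases le_total m n with h | h
    · exact key m n hm h
    · rw [dist_comm]; exact key n m hn h
  choose! φ hφ using hlim
  have hφ0' : φ 0 = a := by
    refine tendsto_nhds_unique (hφ 0 le_rfl) ?_
    have heq : (fun n : ℕ => Φ n 0) = fun _ => a := funext hΦ0
    rw [heq]
    exact tendsto_const_nhds
  -- speeds converge
  have hcn : Tendsto (fun n : ℕ => dist a (ψ n) / n) atTop (nhds c) := by
    have hDiv : Tendsto (fun n : ℕ => D / (n:ℝ)) atTop (nhds 0) :=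
      tendsto_const_div_atTop_nhds_zero_nat D
    have hbound : ∀ᶠ n : ℕ in atTop, ‖dist a (ψ n) / n - c‖ ≤ D / n := by
      filter_upwards [eventually_ge_atTop 1] with n hn
      have hnpos : (0:ℝ) < n := Nat.cast_pos.2 hn
      have h1 : dist (ψ 0) (ψ (n:ℝ)) = c * n := by
        rw [hspeed 0 Set.self_mem_Ici (n:ℝ) (Set.mem_Ici.2 (Nat.cast_nonneg n))]
        rw [abs_of_nonpos (by linarith : (0:ℝ) - n ≤ 0)]
        ring
      have h2 : |dist a (ψ (n:ℝ)) - c * n| ≤ D := by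
        rw [← h1]
        exact abs_dist_sub_le a (ψ 0) (ψ (n:ℝ))
      rw [Real.norm_eq_abs]
      have h3 : dist a (ψ (n:ℝ)) / n - c = (dist a (ψ (n:ℝ)) - c * n) / n := by
        field_simp
      rw [h3, abs_div, abs_of_nonneg hnpos.le]
      gcongr
    have h0 : Tendsto (fun n : ℕ => dist a (ψ n) / n - c) atTop (nhds 0) :=
      squeeze_zero_norm' hbound hDiv
    have := h0.add_const c
    simpa using this
  -- the limit curve has speed c
  have hφspeed : HasSpeedOn φ (Set.Ici 0) c := by
    intro s hs t ht
    rw [Set.mem_Ici] at hs ht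
    have hds : Tendsto (fun n : ℕ => dist (Φ n s) (Φ n t)) atTop
        (nhds (dist (φ s) (φ t))) := (hφ s hs).dist (hφ t ht)
    have heq : ∀ᶠ n : ℕ in atTop,
        dist a (ψ n) / n * |s - t| = dist (Φ n s) (Φ n t) := by
      filter_upwards [eventually_ge_atTop (max (max ⌈s⌉₊ ⌈t⌉₊) 1)] with n hn
      have hn1 : 1 ≤ n := le_trans (le_max_right _ _) hn
      have hsn : s ≤ (n:ℝ) := le_trans (Nat.le_ceil s)
        (Nat.cast_le.2 (le_trans (le_trans (le_max_left _ _) (le_max_left _ _)) hn))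
      have htn : t ≤ (n:ℝ) := le_trans (Nat.le_ceil t)
        (Nat.cast_le.2 (le_trans (le_trans (le_max_right _ _) (le_max_left _ _)) hn))
      exact (hΦspeed n hn1 s ⟨hs, hsn⟩ t ⟨ht, htn⟩).symm
    have hds' : Tendsto (fun n : ℕ => dist (Φ n s) (Φ n t)) atTop
        (nhds (c * |s - t|)) :=
      Tendsto.congr' heq (hcn.mul_const |s - t|)
    exact tendsto_nhds_unique hds hds'
  have hφgeo : IsGeodesicOn φ (Set.Ici 0) := ⟨c, hc, hφspeed⟩
  -- membership on the empty set
  have hmem_empty : 𝒢.Mem φ ∅ := by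
    have h := 𝒢.affine 0 (-1) hψ
    have hset : {t : ℝ | (0:ℝ) * t + (-1) ∈ Set.Ici (0:ℝ)} = (∅ : Set ℝ) := by
      ext t; simp
    rw [hset] at h
    refine 𝒢.plim (fun _ => fun t => ψ (0 * t + -1)) φ (fun _ => h)
      ⟨0, le_rfl, ?_⟩ ?_
    · intro s hs; exact absurd hs (Set.notMem_empty s)
    · intro s hs; exact absurd hs (Set.notMem_empty s)
  -- membership on compact subintervals
  have hmemIcc : ∀ a' b' : ℝ, Set.Icc a' b' ⊆ Set.Ici 0 → 𝒢.Mem φ (Set.Icc a' b') := by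
    intro a' b' hsub
    rcases le_or_gt a' b' with hab | hab
    · have ha0 : 0 ≤ a' := hsub ⟨le_rfl, hab⟩
      obtain ⟨N, hN⟩ := exists_nat_gt (max b' 1)
      have hNpos : 0 < N := by
        have h1 : (1:ℝ) < N := lt_of_le_of_lt (le_max_right b' 1) hN
        exact_mod_cast Nat.cast_pos.mp (lt_trans one_pos h1)
      have hb'N : b' ≤ (N:ℝ) := le_of_lt (lt_of_le_of_lt (le_max_left _ _) hN)
      refine 𝒢.plim (fun k => Φ (k + N)) φ ?_ ?_ ?_
      · intro k
        have hk : 0 < k + N := Nat.add_pos_right k hNpos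
        refine mem_Icc_of_mem (hΦmem (k + N) hk) (Set.Icc_subset_Icc ha0 ?_)
        have h1 : (N:ℝ) ≤ ((k + N : ℕ) : ℝ) := Nat.cast_le.2 (Nat.le_add_left N k)
        linarith
      · exact ⟨c, hc, fun s hs t ht => hφspeed s (hsub hs) t (hsub ht)⟩
      · intro t ht
        exact (tendsto_add_atTop_iff_nat N).2 (hφ t (hsub ht))
    · rw [Set.Icc_eq_empty (not_le.2 hab)]
      exact hmem_empty
  have hφmem : 𝒢.Mem φ (Set.Ici 0) := (𝒢.restrict_iff hφgeo).mpr hmemIcc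
  -- parallelism bound
  have hparb : ∀ t : ℝ, 0 ≤ t → dist (φ t) (ψ t) ≤ D := by
    intro t ht
    have h1 : Tendsto (fun n : ℕ => dist (Φ n t) (ψ t)) atTop
        (nhds (dist (φ t) (ψ t))) := (hφ t ht).dist tendsto_const_nhds
    refine le_of_tendsto h1 ?_
    filter_upwards [eventually_ge_atTop (max ⌈t⌉₊ 1)] with n hn
    have hn1 : 1 ≤ n := le_trans (le_max_right _ _) hn
    have htn : t ≤ (n:ℝ) := le_trans (Nat.le_ceil t)
      (Nat.cast_le.2 (le_trans (le_max_left _ _) hn))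
    have h2 := hest1 n hn1 t ht htn
    have h3 : 0 ≤ t / (n:ℝ) := div_nonneg ht (Nat.cast_nonneg n)
    nlinarith
  have hpar : ParallelRays φ ψ := ⟨D, hparb⟩
  refine ⟨φ, ⟨hφmem, hφ0', hpar, hφspeed⟩, ?_⟩
  -- uniqueness
  intro φ' hφ'mem hφ'0 hφ'par t ht
  rw [Set.mem_Ici] at ht
  obtain ⟨M, hM⟩ := hφ'par
  have hconv := hB.2 φ' φ _ (convex_Ici _) hφ'mem hφmem
  have hbound : ∀ s : ℝ, 0 ≤ s → dist (φ' s) (φ s) ≤ M + D := by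
    intro s hs
    calc dist (φ' s) (φ s) ≤ dist (φ' s) (ψ s) + dist (ψ s) (φ s) := dist_triangle _ _ _
      _ ≤ M + D := add_le_add (hM s hs) (by rw [dist_comm]; exact hparb s hs)
  have hzero : dist (φ' t) (φ t) ≤ 0 := by
    have htend : Tendsto (fun n : ℕ => t * (M + D) / n) atTop (nhds 0) :=
      tendsto_const_div_atTop_nhds_zero_nat (t * (M + D))
    refine ge_of_tendsto htend ?_
    filter_upwards [eventually_ge_atTop (max ⌈t⌉₊ 1)] with n hn
    have hn1 : 1 ≤ n := le_trans (le_max_right _ _) hn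
    have hnpos : (0:ℝ) < n := Nat.cast_pos.2 hn1
    have htn : t ≤ (n:ℝ) := le_trans (Nat.le_ceil t)
      (Nat.cast_le.2 (le_trans (le_max_left _ _) hn))
    have h0mem : (0:ℝ) ∈ Set.Ici (0:ℝ) := Set.self_mem_Ici
    have hnmem : (n:ℝ) ∈ Set.Ici (0:ℝ) := Set.mem_Ici.2 (Nat.cast_nonneg n)
    have hb := convexOn_bound hconv h0mem hnmem ht htn hnpos
    rw [hφ'0, hφ0', dist_self] at hb
    have hq : 0 ≤ t / (n:ℝ) := div_nonneg ht hnpos.le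
    calc dist (φ' t) (φ t)
        ≤ (1 - t/n) * 0 + (t/n) * dist (φ' (n:ℝ)) (φ (n:ℝ)) := hb
      _ = (t/n) * dist (φ' (n:ℝ)) (φ (n:ℝ)) := by ring
      _ ≤ (t/n) * (M + D) := by
          refine mul_le_mul_of_nonneg_left (hbound (n:ℝ) (Nat.cast_nonneg n)) hq
      _ = t * (M + D) / n := by ring
  exact dist_le_zero.mp hzero
end

section
/- Let (E,d) be a metric space with basepoint φ_ref, let F : E → ℝ be semi-globally Hölder, let φ : [0,∞) → E be a ray and ψ a geodesic ray in E with d(φ t, ψ t) = o(t) as t → ∞. Then t⁻¹·(F(φ t) − F(ψ t)) → 0 as t → ∞; in particular, if lim_{t→∞} t⁻¹·F(ψ t) exists in ℝ then lim_{t→∞} t⁻¹·F(φ t) exists and equals it. -/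
open Filter Set

variable {E : Type*} [MetricSpace E]

/-- `F : E → ℝ` is semi-globally Hölder with respect to the basepoint `φ_ref`:
there are `C > 0` and `α ∈ (0,1)` such that
`|F x − F y| ≤ C·d(x,y)^α·(max (1 + d(x,φ_ref)) (1 + d(y,φ_ref)))^(1−α)`. -/
def SemiGlobalHolder (φ_ref : E) (F : E → ℝ) : Prop :=
  ∃ C : ℝ, 0 < C ∧ ∃ α : ℝ, α ∈ Set.Ioo (0:ℝ) 1 ∧ ∀ x y : E,
    |F x - F y| ≤ C * dist x y ^ α *
      (max (1 + dist x φ_ref) (1 + dist y φ_ref)) ^ (1 - α)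

/-- If `F : E → ℝ` is semi-globally Hölder, `φ` is a ray and
`ψ` a geodesic ray with `d(φ t, ψ t) = o(t)`, then `t⁻¹·(F(φ t) − F(ψ t)) → 0`;
in particular if `lim_{t→∞} t⁻¹·F(ψ t)` exists in `ℝ` then so does
`lim_{t→∞} t⁻¹·F(φ t)`, with the same value. -/
theorem sgh_slope_along_almost_geodesic
    (φ_ref : E) (F : E → ℝ) (hF : SemiGlobalHolder φ_ref F)
    (φ ψ : ℝ → E) (hψ : IsGeodesicOn ψ (Set.Ici 0))
    (h : Tendsto (fun t : ℝ => t⁻¹ * dist (φ t) (ψ t)) atTop (nhds 0)) :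
    Tendsto (fun t : ℝ => t⁻¹ * (F (φ t) - F (ψ t))) atTop (nhds 0) ∧
    ∀ L : ℝ, Tendsto (fun t : ℝ => t⁻¹ * F (ψ t)) atTop (nhds L) →
      Tendsto (fun t : ℝ => t⁻¹ * F (φ t)) atTop (nhds L) := by

  obtain ⟨C, hC, α, ⟨hα0, hα1⟩, hH⟩ := hF
  obtain ⟨c, hc, hgeo⟩ := hψ
  set K := dist (ψ 0) φ_ref with hKdef
  have hK : 0 ≤ K := dist_nonneg
  set A := 2 + K + c with hAdef
  have hApos : (0:ℝ) < A := by positivity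
  have key : Tendsto (fun t : ℝ => t⁻¹ * (F (φ t) - F (ψ t))) atTop (nhds 0) := by
    apply squeeze_zero_norm'
      (a := fun t => (C * A ^ (1 - α)) * (t⁻¹ * dist (φ t) (ψ t)) ^ α)
    · have h1 : ∀ᶠ t : ℝ in atTop, t⁻¹ * dist (φ t) (ψ t) ≤ 1 :=
        h.eventually_le_const one_pos
      filter_upwards [h1, eventually_ge_atTop (1:ℝ)] with t hd1 ht1
      have ht : (0:ℝ) < t := lt_of_lt_of_le one_pos ht1
      set d := dist (φ t) (ψ t) with hddef
      have hd0 : 0 ≤ d := dist_nonneg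
      have hdt : d ≤ t := by
        have := (mul_le_mul_of_nonneg_left hd1 ht.le)
        rwa [mul_one, mul_inv_cancel_left₀ ht.ne'] at this
      -- distance bounds to basepoint
      have hψt : dist (ψ t) φ_ref ≤ c * t + K := by
        have h0 : dist (ψ t) (ψ 0) = c * |t - 0| := hgeo t (Set.mem_Ici.2 ht.le) 0 (by simp)
        have := dist_triangle (ψ t) (ψ 0) φ_ref
        rw [h0] at this
        simpa [abs_of_nonneg ht.le] using this
      have hφt : dist (φ t) φ_ref ≤ d + (c * t + K) :=
        le_trans (dist_triangle (φ t) (ψ t) φ_ref)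
          (by exact add_le_add (le_refl d) hψt)
      have hmax : max (1 + dist (φ t) φ_ref) (1 + dist (ψ t) φ_ref) ≤ A * t := by
        apply max_le
        · nlinarith
        · nlinarith
      have hmax0 : (0:ℝ) ≤ max (1 + dist (φ t) φ_ref) (1 + dist (ψ t) φ_ref) :=
        le_trans (by positivity) (le_max_left _ _)
      have hF1 : |F (φ t) - F (ψ t)| ≤ C * d ^ α * (A * t) ^ (1 - α) := by
        refine le_trans (hH (φ t) (ψ t)) ?_
        have := Real.rpow_le_rpow hmax0 hmax (by linarith : (0:ℝ) ≤ 1 - α)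
        have hCd : 0 ≤ C * d ^ α := by positivity
        exact mul_le_mul_of_nonneg_left this hCd
      have hnorm : ‖t⁻¹ * (F (φ t) - F (ψ t))‖ = t⁻¹ * |F (φ t) - F (ψ t)| := by
        rw [Real.norm_eq_abs, abs_mul, abs_of_nonneg (by positivity : (0:ℝ) ≤ t⁻¹)]
      rw [hnorm]
      have hstep : t⁻¹ * (C * d ^ α * (A * t) ^ (1 - α)) =
          C * A ^ (1 - α) * (t⁻¹ * d) ^ α := by
        have hAt : (A * t) ^ (1 - α) = A ^ (1 - α) * (t / t ^ α) := by
          rw [Real.mul_rpow hApos.le ht.le, Real.rpow_sub ht, Real.rpow_one]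
        have hid : (t⁻¹ * d) ^ α = d ^ α / t ^ α := by
          rw [inv_mul_eq_div, Real.div_rpow hd0 ht.le]
        rw [hAt, hid]
        have htα : (0:ℝ) < t ^ α := Real.rpow_pos_of_pos ht α
        field_simp
      calc t⁻¹ * |F (φ t) - F (ψ t)|
          ≤ t⁻¹ * (C * d ^ α * (A * t) ^ (1 - α)) :=
            mul_le_mul_of_nonneg_left hF1 (by positivity)
        _ = C * A ^ (1 - α) * (t⁻¹ * d) ^ α := hstep
    · have h2 : Tendsto (fun t : ℝ => (t⁻¹ * dist (φ t) (ψ t)) ^ α) atTop (nhds 0) := by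
        have := h.rpow_const (p := α) (Or.inr hα0.le)
        rwa [Real.zero_rpow hα0.ne'] at this
      simpa using h2.const_mul (C * A ^ (1 - α))
  refine ⟨key, fun L hL => ?_⟩
  have := key.add hL
  rw [zero_add] at this
  refine this.congr fun t => ?_
  ring
end

section
/- Let (E,d) be a metric space with basepoint φ_ref that is Busemann convex with respect to a distinguished class 𝒢 of geodesics, and let F : E → ℝ be semi-globally Hölder with constants C > 0 and α ∈ (0,1). Let φ, ψ ∈ 𝒢 be geodesic rays, of speeds c_φ and c_ψ, along which the slopes s_φ := lim_{t→∞} t⁻¹·F(φ t) and s_ψ := lim_{t→∞} t⁻¹·F(ψ t) exist in ℝ. Then |s_φ − s_ψ| ≤ C·d_rad(φ,ψ)^α·(1 + max(c_φ, c_ψ))^{1−α}; i.e., the radial transform of F is semi-globally Hölder on the asymptotic cone. -/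
open Filter Set

variable {E : Type*} [MetricSpace E]

/-- Let `F : E → ℝ` be semi-globally Hölder with constants
`C > 0` and `α ∈ (0,1)`, on a Busemann convex space. If `φ, ψ ∈ 𝒢` are geodesic
rays of speeds `cφ, cψ` along which the slopes `sφ, sψ` of `F` exist, and
`L = d_rad(φ,ψ)`, then `|sφ − sψ| ≤ C·L^α·(1 + max cφ cψ)^(1−α)`: the radial
transform of `F` is semi-globally Hölder on the asymptotic cone. -/
theorem radial_transform_sgh
    (𝒢 : DistinguishedClass E) (hB : BusemannConvex 𝒢) (φ_ref : E)
    (F : E → ℝ) (C α : ℝ) (hC : 0 < C) (hα : α ∈ Set.Ioo (0:ℝ) 1)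
    (hF : ∀ x y : E, |F x - F y| ≤ C * dist x y ^ α *
      (max (1 + dist x φ_ref) (1 + dist y φ_ref)) ^ (1 - α))
    (φ ψ : ℝ → E) (hφ : 𝒢.Mem φ (Set.Ici 0)) (hψ : 𝒢.Mem ψ (Set.Ici 0))
    (cφ cψ : ℝ) (hcφ : 0 ≤ cφ) (hcψ : 0 ≤ cψ)
    (hsφ : HasSpeedOn φ (Set.Ici 0) cφ) (hsψ : HasSpeedOn ψ (Set.Ici 0) cψ)
    (sφ sψ : ℝ)
    (hslφ : Tendsto (fun t : ℝ => t⁻¹ * F (φ t)) atTop (nhds sφ))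
    (hslψ : Tendsto (fun t : ℝ => t⁻¹ * F (ψ t)) atTop (nhds sψ))
    (L : ℝ)
    (hL : Tendsto (fun t : ℝ => t⁻¹ * dist (φ t) (ψ t)) atTop (nhds L)) :
    |sφ - sψ| ≤ C * L ^ α * (1 + max cφ cψ) ^ (1 - α) := by
  obtain ⟨hα0, hα1⟩ := hα
  set m := max cφ cψ with hm
  have hm0 : 0 ≤ m := le_trans hcφ (le_max_left _ _)
  have hL0 : 0 ≤ L := by
    refine ge_of_tendsto hL ?_
    filter_upwards [eventually_gt_atTop (0:ℝ)] with t ht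
    positivity
  set K := dist (φ 0) φ_ref + dist (ψ 0) φ_ref with hK
  have hK0 : 0 ≤ K := by positivity
  have hrpow : Tendsto (fun t : ℝ => C * (t⁻¹ * dist (φ t) (ψ t)) ^ α * (1 + m) ^ (1 - α))
      atTop (nhds (C * L ^ α * (1 + m) ^ (1 - α))) := by
    apply Tendsto.mul_const
    apply Tendsto.const_mul
    exact (Real.continuousAt_rpow_const L α (Or.inr hα0.le)).tendsto.comp hL
  have hlhs : Tendsto (fun t : ℝ => |t⁻¹ * F (φ t) - t⁻¹ * F (ψ t)|) atTop
      (nhds |sφ - sψ|) := (hslφ.sub hslψ).abs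
  refine le_of_tendsto_of_tendsto hlhs hrpow ?_
  filter_upwards [eventually_ge_atTop (1 + K)] with t ht
  have ht1 : (1:ℝ) ≤ t := le_trans (by linarith) ht
  have ht0 : (0:ℝ) < t := lt_of_lt_of_le one_pos ht1
  have htinv : (0:ℝ) < t⁻¹ := inv_pos.2 ht0
  have htmem : t ∈ Set.Ici (0:ℝ) := le_of_lt ht0
  have hzmem : (0:ℝ) ∈ Set.Ici (0:ℝ) := Set.self_mem_Ici
  have hdφ : dist (φ t) φ_ref ≤ cφ * t + dist (φ 0) φ_ref := by
    calc dist (φ t) φ_ref ≤ dist (φ t) (φ 0) + dist (φ 0) φ_ref := dist_triangle _ _ _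
      _ = cφ * t + dist (φ 0) φ_ref := by
          rw [hsφ t htmem 0 hzmem, sub_zero, abs_of_pos ht0]
  have hdψ : dist (ψ t) φ_ref ≤ cψ * t + dist (ψ 0) φ_ref := by
    calc dist (ψ t) φ_ref ≤ dist (ψ t) (ψ 0) + dist (ψ 0) φ_ref := dist_triangle _ _ _
      _ = cψ * t + dist (ψ 0) φ_ref := by
          rw [hsψ t htmem 0 hzmem, sub_zero, abs_of_pos ht0]
  set M := max (1 + dist (φ t) φ_ref) (1 + dist (ψ t) φ_ref) with hM
  have hM0 : 0 ≤ M := le_trans (by positivity) (le_max_left _ _)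
  have hMle : t⁻¹ * M ≤ 1 + m := by
    have h1 : M ≤ 1 + K + m * t := by
      apply max_le
      · have : cφ * t ≤ m * t := mul_le_mul_of_nonneg_right (le_max_left _ _) ht0.le
        have hnn : (0:ℝ) ≤ dist (ψ 0) φ_ref := dist_nonneg
        simp only [hK]; linarith
      · have : cψ * t ≤ m * t := mul_le_mul_of_nonneg_right (le_max_right _ _) ht0.le
        have hnn : (0:ℝ) ≤ dist (φ 0) φ_ref := dist_nonneg
        simp only [hK]; linarith
    have h2 : t⁻¹ * M ≤ t⁻¹ * (1 + K + m * t) := mul_le_mul_of_nonneg_left h1 htinv.le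
    have h3 : t⁻¹ * (1 + K + m * t) = (1 + K) / t + m := by
      field_simp
    rw [h3] at h2
    have h4 : (1 + K) / t ≤ 1 := by
      rw [div_le_one ht0]; linarith
    linarith
  have key : |t⁻¹ * F (φ t) - t⁻¹ * F (ψ t)|
      ≤ C * (t⁻¹ * dist (φ t) (ψ t)) ^ α * (1 + m) ^ (1 - α) := by
    have h0 : |t⁻¹ * F (φ t) - t⁻¹ * F (ψ t)| = t⁻¹ * |F (φ t) - F (ψ t)| := by
      rw [← mul_sub, abs_mul, abs_of_pos htinv]
    rw [h0]
    have h1 : t⁻¹ * |F (φ t) - F (ψ t)| ≤ t⁻¹ * (C * dist (φ t) (ψ t) ^ α * M ^ (1 - α)) :=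
      mul_le_mul_of_nonneg_left (hF (φ t) (ψ t)) htinv.le
    refine h1.trans ?_
    have hsplit : t⁻¹ = t⁻¹ ^ α * t⁻¹ ^ (1 - α) := by
      rw [← Real.rpow_add htinv, add_sub_cancel, Real.rpow_one]
    calc t⁻¹ * (C * dist (φ t) (ψ t) ^ α * M ^ (1 - α))
        = C * (t⁻¹ ^ α * dist (φ t) (ψ t) ^ α) * (t⁻¹ ^ (1 - α) * M ^ (1 - α)) := by
          conv_lhs => rw [hsplit]
          ring
      _ = C * (t⁻¹ * dist (φ t) (ψ t)) ^ α * (t⁻¹ * M) ^ (1 - α) := by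
          rw [Real.mul_rpow htinv.le dist_nonneg, Real.mul_rpow htinv.le hM0]
      _ ≤ C * (t⁻¹ * dist (φ t) (ψ t)) ^ α * (1 + m) ^ (1 - α) := by
          apply mul_le_mul_of_nonneg_left
          · exact Real.rpow_le_rpow (by positivity) hMle (by linarith)
          · positivity
  exact key
end

section
/- Let (E,d) be a metric space and G a group acting on E by isometries; set d_G(a,b) := inf_{g∈G} d(a, g·b) and call a pair {a,b} G-minimal if d(a,b) = d_G(a,b). Let φ : [0,1] → E be a geodesic. Then {φ(s), φ(t)} is G-minimal for all s, t ∈ [0,1] if and only if the pair {φ(0), φ(1)} is G-minimal. -/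
open Set

private lemma bdd_aux {E G : Type*} [MetricSpace E] [Group G] [MulAction G E]
    (a b : E) : BddBelow (Set.range fun g : G => dist a (g • b)) :=
  ⟨0, by rintro x ⟨g, rfl⟩; exact dist_nonneg⟩

/-- Let `G` act by isometries on a metric space `E`, with
`d_G(a,b) = inf_{g∈G} d(a, g·b)`, a pair `{a,b}` being `G`-minimal if
`d(a,b) = d_G(a,b)`. A geodesic `φ : [0,1] → E` is `G`-minimal (all pairs of
its values are `G`-minimal) iff the pair `{φ 0, φ 1}` is `G`-minimal. -/
theorem gMinimal_geodesic_iff_endpoints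
    {E G : Type*} [MetricSpace E] [Group G] [MulAction G E]
    (hiso : ∀ g : G, Isometry (fun x : E => g • x))
    (φ : ℝ → E) (c : ℝ) (hc : 0 ≤ c)
    (hgeo : ∀ s ∈ Set.Icc (0:ℝ) 1, ∀ t ∈ Set.Icc (0:ℝ) 1,
      dist (φ s) (φ t) = c * |s - t|) :
    (∀ s ∈ Set.Icc (0:ℝ) 1, ∀ t ∈ Set.Icc (0:ℝ) 1,
        dist (φ s) (φ t) = ⨅ g : G, dist (φ s) (g • φ t)) ↔
      dist (φ 0) (φ 1) = ⨅ g : G, dist (φ 0) (g • φ 1) := by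
  constructor
  · intro h
    exact h 0 (by norm_num) 1 (by norm_num)
  · intro hend
    -- key lemma for s ≤ t
    have key : ∀ s ∈ Set.Icc (0:ℝ) 1, ∀ t ∈ Set.Icc (0:ℝ) 1, s ≤ t →
        ∀ g : G, dist (φ s) (φ t) ≤ dist (φ s) (g • φ t) := by
      intro s hs t ht hst g
      have h01 : dist (φ 0) (φ 1) = c := by
        rw [hgeo 0 (by norm_num) 1 (by norm_num)]; norm_num
      have hle : dist (φ 0) (φ 1) ≤ dist (φ 0) (g • φ 1) := by
        rw [hend]; exact ciInf_le (bdd_aux _ _) g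
      have h0s : dist (φ 0) (φ s) = c * s := by
        rw [hgeo 0 (by norm_num) s hs, abs_of_nonpos (by linarith [hs.1])]; ring_nf
      have ht1 : dist (φ t) (φ 1) = c * (1 - t) := by
        rw [hgeo t ht 1 (by norm_num), abs_of_nonpos (by linarith [ht.2])]; ring_nf
      have hst' : dist (φ s) (φ t) = c * (t - s) := by
        rw [hgeo s hs t ht, abs_of_nonpos (by linarith)]; ring_nf
      have hgt1 : dist (g • φ t) (g • φ 1) = c * (1 - t) := by
        rw [(hiso g).dist_eq]; exact ht1
      have tri : dist (φ 0) (g • φ 1) ≤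
          dist (φ 0) (φ s) + dist (φ s) (g • φ t) + dist (g • φ t) (g • φ 1) :=
        dist_triangle4 _ _ _ _
      have hs1 : s ≤ 1 := le_trans hst ht.2
      nlinarith [hs.1, ht.2, dist_nonneg (x := φ s) (y := g • φ t)]
    intro s hs t ht
    refine le_antisymm ?_ ?_
    · apply le_ciInf
      intro g
      rcases le_total s t with hst | hst
      · exact key s hs t ht hst g
      · have : dist (φ t) (φ s) ≤ dist (φ t) (g⁻¹ • φ s) := key t ht s hs hst g⁻¹
        have heq : dist (φ t) (g⁻¹ • φ s) = dist (φ s) (g • φ t) := by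
          rw [dist_comm, ← (hiso g).dist_eq (g⁻¹ • φ s) (φ t)]
          simp [smul_smul]
        rw [dist_comm (φ s) (φ t)]
        rw [heq] at this
        exact this
    · have : (⨅ g : G, dist (φ s) (g • φ t)) ≤ dist (φ s) ((1:G) • φ t) :=
        ciInf_le (bdd_aux _ _) 1
      simpa using this
end

section
/- Let (E,d) be a metric space with basepoint φ_ref. If F : E → ℝ ∪ {+∞} is strongly lsc and G : E → ℝ is semi-globally Hölder, then F + G : E → ℝ ∪ {+∞} is strongly lsc. -/
open Set

variable {E : Type*} [MetricSpace E]

/-- Strong lower semicontinuity: the intersection of each sublevel set with a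
closed ball is compact. -/
def StronglyLsc (F : E → EReal) : Prop :=
  ∀ (x : E) (r : ℝ) (c : ℝ),
    IsCompact (Metric.closedBall x r ∩ {y : E | F y ≤ (c : EReal)})

/-- A semi-globally Hölder function is continuous. -/
lemma SemiGlobalHolder.continuous (φ_ref : E) (G : E → ℝ)
    (hG : SemiGlobalHolder φ_ref G) : Continuous G := by
  obtain ⟨C, hC, α, ⟨hα0, hα1⟩, hHol⟩ := hG
  rw [continuous_iff_continuousAt]
  intro y0
  rw [ContinuousAt, tendsto_iff_dist_tendsto_zero]
  set g : E → ℝ := fun y =>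
    C * dist y y0 ^ α * (1 + dist y y0 + dist y0 φ_ref) ^ (1 - α) with hg
  have hgcont : Continuous g := by
    apply Continuous.mul
    · apply Continuous.mul continuous_const
      exact (Continuous.dist continuous_id continuous_const).rpow_const
        (fun _ => Or.inr hα0.le)
    · exact (Continuous.add (Continuous.add continuous_const
        (Continuous.dist continuous_id continuous_const)) continuous_const).rpow_const
        (fun _ => Or.inr (by linarith))
  have hg0 : g y0 = 0 := by
    simp [hg, Real.zero_rpow (ne_of_gt hα0)]
  apply squeeze_zero (fun _ => dist_nonneg) _ (hg0 ▸ hgcont.tendsto y0)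
  intro y
  rw [Real.dist_eq]
  refine le_trans (hHol y y0) ?_
  simp only [hg]
  gcongr
  all_goals first
    | linarith
    | exact max_le (by linarith [dist_triangle y y0 φ_ref])
        (by linarith [dist_nonneg (x := y) (y := y0)])

/-- The sum of a strongly lsc function `F : E → ℝ ∪ {+∞}` and
a semi-globally Hölder function `G : E → ℝ` is strongly lsc. -/
theorem stronglyLsc_add_sgh
    (φ_ref : E) (F : E → EReal) (hF : StronglyLsc F)
    (G : E → ℝ) (hG : SemiGlobalHolder φ_ref G) :
    StronglyLsc (fun x => F x + ((G x : ℝ) : EReal)) := by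
  have hGc := SemiGlobalHolder.continuous φ_ref G hG
  obtain ⟨C, hC, α, ⟨hα0, hα1⟩, hHol⟩ := hG
  intro x r c
  set B := Metric.closedBall x r with hB
  set r' := max r 0 with hr'
  set M := C * r' ^ α * (1 + r' + dist x φ_ref) ^ (1 - α) with hM
  set m := G x - M with hm
  have hr'0 : 0 ≤ r' := le_max_right r 0
  have hGlb : ∀ y ∈ B, m ≤ G y := by
    intro y hy
    have hd : dist y x ≤ r' := le_trans (Metric.mem_closedBall.mp hy) (le_max_left r 0)
    have h1 : |G y - G x| ≤ M := by
      refine le_trans (hHol y x) ?_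
      rw [hM]
      gcongr
      all_goals first
        | linarith
        | exact max_le (by linarith [dist_triangle y x φ_ref]) (by linarith)
    linarith [(abs_le.mp h1).1]
  have key : B ∩ {y | F y + ((G y : ℝ) : EReal) ≤ (c : EReal)} =
      (B ∩ {y | F y ≤ ((c - m : ℝ) : EReal)}) ∩
      (⋂ q : ℝ, ({y | G y ≤ q} ∪ (B ∩ {y | F y ≤ ((c - q : ℝ) : EReal)}))) := by
    ext y
    simp only [mem_inter_iff, mem_setOf_eq, mem_iInter, mem_union]
    constructor
    · rintro ⟨hyB, hyF⟩
      have hsub : F y ≤ ((c - G y : ℝ) : EReal) := by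
        rw [EReal.coe_sub]
        exact (EReal.le_sub_iff_add_le (Or.inl (EReal.coe_ne_bot _))
          (Or.inl (EReal.coe_ne_top _))).mpr hyF
      refine ⟨⟨hyB, le_trans hsub ?_⟩, fun q => ?_⟩
      · exact_mod_cast (by linarith [hGlb y hyB] : (c - G y : ℝ) ≤ c - m)
      · by_cases hq : G y ≤ q
        · exact Or.inl hq
        · exact Or.inr ⟨hyB, le_trans hsub
            (by exact_mod_cast (by linarith : (c - G y : ℝ) ≤ c - q))⟩
    · rintro ⟨⟨hyB, _⟩, hq⟩
      refine ⟨hyB, ?_⟩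
      rw [← EReal.le_sub_iff_add_le (Or.inl (EReal.coe_ne_bot _))
        (Or.inl (EReal.coe_ne_top _)), ← EReal.coe_sub]
      by_contra hlt
      push_neg at hlt
      obtain ⟨z, hz1, hz2⟩ := EReal.exists_between_coe_real hlt
      rcases hq (c - z) with h | ⟨_, h⟩
      · have hz1' : (c - G y : ℝ) < z := EReal.coe_lt_coe_iff.mp hz1
        linarith
      · have hzz : F y ≤ ((z : ℝ) : EReal) := by
          have : (c - (c - z) : ℝ) = z := by ring
          rwa [this] at h
        exact absurd hzz (not_le.mpr hz2)
  show IsCompact (B ∩ {y | F y + ((G y : ℝ) : EReal) ≤ (c : EReal)})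
  rw [key]
  apply IsCompact.inter_right (hF x r (c - m))
  apply isClosed_iInter
  intro q
  apply IsClosed.union
  · exact isClosed_le hGc continuous_const
  · exact (hF x r (c - q)).isClosed
end

section
/- Let (E,d) be a metric space with basepoint φ_ref, let G be a locally compact topological group acting continuously and properly on E by isometries, and let H ⊆ G be a closed subgroup. Let F : E → ℝ ∪ {+∞} be quasi G-invariant and not identically +∞. Then F is coercive modulo H if and only if F is coercive modulo G and the quotient space G/H is compact. -/
/-!
If `F` is coercive modulo `H` it is bounded below, and for a point `x₀` with `F x₀ < ∞`
quasi-invariance makes `g ↦ F (g • x₀) - F x₀` a homomorphism `G → ℝ`. A homomorphism into `ℝ`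
that is bounded below vanishes, so the whole orbit `G • x₀` lies in one sublevel set of `F`,
hence within bounded distance of `H • φ_ref`; properness turns this into a compact `K ⊆ G`
with `K H = G`, i.e. `G ⧸ H` is compact. Conversely, such a `K` puts every `g • φ_ref` within
`sup_{k ∈ K} d(k⁻¹ • φ_ref, φ_ref)` of `H • φ_ref`, so `d_H ≤ d_G + const`; and `d_G ≤ d_H`
always.
-/

open Set Function

theorem IsOpenMap.exists_isCompact_image_eq_univ {X Y : Type*} [TopologicalSpace X]
    [TopologicalSpace Y] [WeaklyLocallyCompactSpace X] [CompactSpace Y] {f : X → Y}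
    (hf : IsOpenMap f) (hsurj : Surjective f) :
    ∃ K : Set X, IsCompact K ∧ f '' K = univ := by
  choose V hVc hVn using fun x : X => exists_compact_mem_nhds x
  obtain ⟨t, -, ht⟩ := isCompact_univ.elim_nhds_subcover (fun y => f '' V (surjInv hsurj y))
    fun y _ => by simpa [surjInv_eq hsurj y] using hf.image_mem_nhds (hVn (surjInv hsurj y))
  refine ⟨⋃ y ∈ t, V (surjInv hsurj y), t.isCompact_biUnion fun y _ => hVc _, ?_⟩
  rw [image_iUnion₂]
  exact univ_subset_iff.1 ht

theorem eq_zero_of_map_mul_of_bddBelow {G : Type*} [Group G] {f : G → ℝ}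
    (hmul : ∀ a b, f (a * b) = f a + f b) (hf : BddBelow (range f)) (g : G) : f g = 0 := by
  have hone : f 1 = 0 := by simpa using hmul 1 1
  have hpow : ∀ (a : G) (n : ℕ), f (a ^ n) = n * f a := by
    intro a n
    induction n with
    | zero => simp [hone]
    | succ n ih => rw [pow_succ, hmul, ih]; push_cast; ring
  have hnonneg : ∀ a, 0 ≤ f a := by
    intro a
    by_contra! ha
    obtain ⟨c, hc⟩ := hf
    obtain ⟨n, hn⟩ := exists_nat_gt (c / f a)
    have hlow : c ≤ n * f a := hpow a n ▸ hc ⟨a ^ n, rfl⟩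
    have := (div_lt_iff_of_neg ha).1 hn
    linarith
  have := hmul g g⁻¹
  rw [mul_inv_cancel, hone] at this
  linarith [hnonneg g, hnonneg g⁻¹]

structure IsQuasiInvariant (G : Type*) {E : Type*} [Group G] [MulAction G E]
    (F : E → EReal) : Prop where
  ne_top_iff : ∀ (g : G) (x : E), F (g • x) ≠ ⊤ ↔ F x ≠ ⊤
  sub_eq : ∀ (g : G) (x y : E), F x ≠ ⊤ → F y ≠ ⊤ → F (g • x) - F (g • y) = F x - F y

theorem IsQuasiInvariant.apply_smul_eq {G E : Type*} [Group G] [MulAction G E] {F : E → EReal}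
    (hF : IsQuasiInvariant G F) {x₀ : E} (hx₀ : F x₀ ≠ ⊤) {c : ℝ} (hc : ∀ x, (c : EReal) ≤ F x)
    (g : G) : F (g • x₀) = F x₀ := by
  have hcoe : ∀ x, F x ≠ ⊤ → F x = (F x).toReal := fun x hx =>
    (EReal.coe_toReal hx (ne_bot_of_le_ne_bot (EReal.coe_ne_bot c) (hc x))).symm
  have hfin : ∀ a : G, F (a • x₀) ≠ ⊤ := fun a => (hF.ne_top_iff a x₀).2 hx₀
  set f : G → ℝ := fun a => (F (a • x₀)).toReal - (F x₀).toReal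
  have hmul : ∀ a b, f (a * b) = f a + f b := by
    intro a b
    have h := hF.sub_eq a (b • x₀) x₀ (hfin b) hx₀
    rw [← mul_smul, hcoe _ (hfin (a * b)), hcoe _ (hfin a), hcoe _ (hfin b), hcoe _ hx₀,
      ← EReal.coe_sub, ← EReal.coe_sub, EReal.coe_eq_coe_iff] at h
    simp only [f]
    linarith
  have hbdd : BddBelow (range f) := by
    refine ⟨c - (F x₀).toReal, forall_mem_range.2 fun a => ?_⟩
    have := EReal.coe_le_coe_iff.1 (hcoe _ (hfin a) ▸ hc (a • x₀))
    simp only [f]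
    linarith
  rw [hcoe _ (hfin g), hcoe _ hx₀, sub_eq_zero.1 (eq_zero_of_map_mul_of_bddBelow hmul hbdd g)]

section Action

variable {G E : Type*} [Group G] [PseudoMetricSpace E] [MulAction G E]

theorem iInf_dist_smul_le_iInf_subgroup (H : Subgroup G) (p x : E) :
    ⨅ g : G, dist x (g • p) ≤ ⨅ h : H, dist x ((h : G) • p) :=
  le_ciInf fun h =>
    ciInf_le (f := fun g : G => dist x (g • p)) ⟨0, forall_mem_range.2 fun _ => dist_nonneg⟩ h

theorem iInf_dist_smul_subgroup_le_add {H : Subgroup G} {p : E} {M : ℝ}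
    (hM : ∀ g : G, ∃ h ∈ H, dist (g • p) (h • p) ≤ M) (x : E) :
    ⨅ h : H, dist x ((h : G) • p) ≤ (⨅ g : G, dist x (g • p)) + M := by
  rw [← sub_le_iff_le_add]
  refine le_ciInf fun g => ?_
  obtain ⟨h, hH, hgh⟩ := hM g
  have := ciInf_le (f := fun h : H => dist x ((h : G) • p))
    ⟨0, forall_mem_range.2 fun _ => dist_nonneg⟩ ⟨h, hH⟩
  linarith [dist_triangle x (g • p) (h • p)]

variable [TopologicalSpace G] [IsTopologicalGroup G] [IsIsometricSMul G E]

theorem compactSpace_quotient_of_iInf_dist_smul_lt {H : Subgroup G} {p x₀ : E} {R : ℝ}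
    (hproper : IsCompact (closure {g : G | dist p (g • x₀) ≤ R}))
    (hbound : ∀ g : G, ⨅ h : H, dist (g • x₀) ((h : G) • p) < R) :
    CompactSpace (G ⧸ H) := by
  refine isCompact_univ_iff.1 ?_
  convert hproper.inv.image QuotientGroup.continuous_mk
  refine (eq_univ_of_forall fun q => ?_).symm
  obtain ⟨g, rfl⟩ := QuotientGroup.mk_surjective q
  obtain ⟨h, hh⟩ := exists_lt_of_ciInf_lt (hbound g⁻¹)
  have hmem : (h : G)⁻¹ * g⁻¹ ∈ {u : G | dist p (u • x₀) ≤ R} := by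
    rw [mem_ofPred_eq, mul_smul, ← dist_smul (h : G), smul_inv_smul, dist_comm]
    exact hh.le
  refine ⟨g * h, ?_, QuotientGroup.mk_mul_of_mem g h.2⟩
  simpa using subset_closure hmem

variable [WeaklyLocallyCompactSpace G] [ContinuousSMul G E]

theorem exists_dist_smul_le_of_compactSpace_quotient (H : Subgroup G) [CompactSpace (G ⧸ H)]
    (p : E) : ∃ M : ℝ, ∀ g : G, ∃ h ∈ H, dist (g • p) (h • p) ≤ M := by
  obtain ⟨K, hK, hKH⟩ := (QuotientGroup.isOpenMap_coe (N := H)).exists_isCompact_image_eq_univ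
    QuotientGroup.mk_surjective
  obtain ⟨M, hM⟩ := hK.bddAbove_image (f := fun k : G => dist (k⁻¹ • p) p) (by fun_prop)
  refine ⟨M, fun g => ?_⟩
  obtain ⟨k, hk, hkg⟩ := (eq_univ_iff_forall.1 hKH) ((g⁻¹ : G) : G ⧸ H)
  have hkH : k⁻¹ * g⁻¹ ∈ H := QuotientGroup.eq.1 hkg
  refine ⟨(k⁻¹ * g⁻¹)⁻¹, inv_mem hkH, ?_⟩
  calc dist (g • p) ((k⁻¹ * g⁻¹)⁻¹ • p)
      = dist (k⁻¹ • p) p := by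
        rw [← dist_smul (k⁻¹ * g⁻¹), smul_inv_smul, mul_smul, inv_smul_smul]
    _ ≤ M := hM ⟨k, hk, rfl⟩

end Action

/-- With `d = d_K` this is coercivity modulo `K`. -/
def IsCoerciveWrt {E : Type*} (F : E → EReal) (d : E → ℝ) : Prop :=
  ∃ σ C : ℝ, 0 < σ ∧ 0 < C ∧ ∀ x, ((σ * d x - C : ℝ) : EReal) ≤ F x

namespace IsCoerciveWrt

variable {E : Type*} {F : E → EReal} {d : E → ℝ}

theorem of_le_add (h : IsCoerciveWrt F d) {d' : E → ℝ} {M : ℝ} (hle : ∀ x, d' x ≤ d x + M) :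
    IsCoerciveWrt F d' := by
  obtain ⟨σ, C, hσ, hC, hF⟩ := h
  refine ⟨σ, C + σ * |M|, hσ, by positivity, fun x => le_trans ?_ (hF x)⟩
  have := mul_le_mul_of_nonneg_left (hle x) hσ.le
  exact EReal.coe_le_coe_iff.2 (by nlinarith [le_abs_self M])

theorem exists_forall_coe_le (h : IsCoerciveWrt F d) (hd : ∀ x, 0 ≤ d x) :
    ∃ c : ℝ, ∀ x, (c : EReal) ≤ F x := by
  obtain ⟨σ, C, hσ, -, hF⟩ := h
  exact ⟨-C, fun x => le_trans (EReal.coe_le_coe_iff.2 (by nlinarith [hd x])) (hF x)⟩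

theorem exists_forall_le_of_le (h : IsCoerciveWrt F d) (r : ℝ) :
    ∃ R : ℝ, ∀ x, F x ≤ r → d x ≤ R := by
  obtain ⟨σ, C, hσ, -, hF⟩ := h
  refine ⟨(r + C) / σ, fun x hx => ?_⟩
  have := EReal.coe_le_coe_iff.1 ((hF x).trans hx)
  rw [le_div_iff₀ hσ]
  linarith

end IsCoerciveWrt

theorem coercive_mod_subgroup_iff_general
    {E G : Type*} [MetricSpace E] [Group G] [TopologicalSpace G]
    [IsTopologicalGroup G] [LocallyCompactSpace G] [MulAction G E]
    (hcont : Continuous fun p : G × E => p.1 • p.2)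
    (hiso : ∀ g : G, Isometry (fun x : E => g • x))
    (hproper : ∀ (a b : E) (C : ℝ), IsCompact (closure {g : G | dist a (g • b) ≤ C}))
    (φ_ref : E)
    (H : Subgroup G)
    (F : E → EReal)
    (hquasi_fin : ∀ (g : G) (x : E), F (g • x) ≠ ⊤ ↔ F x ≠ ⊤)
    (hquasi : ∀ (g : G) (x y : E), F x ≠ ⊤ → F y ≠ ⊤ →
      F (g • x) - F (g • y) = F x - F y)
    (hne : ∃ x : E, F x ≠ ⊤) :
    (∃ σ C : ℝ, 0 < σ ∧ 0 < C ∧ ∀ x : E,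
        ((σ * (⨅ h : H, dist x ((h : G) • φ_ref)) - C : ℝ) : EReal) ≤ F x) ↔
      ((∃ σ C : ℝ, 0 < σ ∧ 0 < C ∧ ∀ x : E,
          ((σ * (⨅ g : G, dist x (g • φ_ref)) - C : ℝ) : EReal) ≤ F x) ∧
        CompactSpace (G ⧸ H)) := by
  have : IsIsometricSMul G E := ⟨hiso⟩
  have : ContinuousSMul G E := ⟨hcont⟩
  have hF : IsQuasiInvariant G F := ⟨hquasi_fin, hquasi⟩
  constructor
  · intro hcoer
    change IsCoerciveWrt F _ at hcoer
    refine ⟨hcoer.of_le_add (M := 0) fun x => by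
      simpa using iInf_dist_smul_le_iInf_subgroup H φ_ref x, ?_⟩
    obtain ⟨x₀, hx₀⟩ := hne
    obtain ⟨c, hc⟩ := hcoer.exists_forall_coe_le fun x => Real.iInf_nonneg fun _ => dist_nonneg
    obtain ⟨R, hR⟩ := hcoer.exists_forall_le_of_le (F x₀).toReal
    refine compactSpace_quotient_of_iInf_dist_smul_lt (hproper φ_ref x₀ (R + 1)) fun g => ?_
    refine (hR _ ?_).trans_lt (lt_add_one R)
    rw [hF.apply_smul_eq hx₀ hc]
    exact EReal.le_coe_toReal hx₀
  · rintro ⟨hcoer, _⟩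
    obtain ⟨M, hM⟩ := exists_dist_smul_le_of_compactSpace_quotient H φ_ref
    exact IsCoerciveWrt.of_le_add hcoer (iInf_dist_smul_subgroup_le_add hM)

/-- Let a locally compact group `G` act continuously and
properly by isometries on a metric space `E` with basepoint `φ_ref`, let
`H ⊆ G` be a closed subgroup, and let `F : E → ℝ ∪ {+∞}` be quasi
`G`-invariant and not identically `+∞`. Then `F` is coercive modulo `H` iff
`F` is coercive modulo `G` and `G/H` is compact. -/
theorem coercive_mod_subgroup_iff
    {E G : Type*} [MetricSpace E] [Group G] [TopologicalSpace G]
    [IsTopologicalGroup G] [LocallyCompactSpace G] [MulAction G E]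
    (hcont : Continuous fun p : G × E => p.1 • p.2)
    (hiso : ∀ g : G, Isometry (fun x : E => g • x))
    (hproper : ∀ (a b : E) (C : ℝ), IsCompact (closure {g : G | dist a (g • b) ≤ C}))
    (φ_ref : E)
    (H : Subgroup G) (hH : IsClosed (H : Set G))
    (F : E → EReal)
    (hquasi_fin : ∀ (g : G) (x : E), F (g • x) ≠ ⊤ ↔ F x ≠ ⊤)
    (hquasi : ∀ (g : G) (x y : E), F x ≠ ⊤ → F y ≠ ⊤ →
      F (g • x) - F (g • y) = F x - F y)
    (hbot : ∀ x : E, F x ≠ ⊥)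
    (hne : ∃ x : E, F x ≠ ⊤) :
    (∃ σ C : ℝ, 0 < σ ∧ 0 < C ∧ ∀ x : E,
        ((σ * (⨅ h : H, dist x ((h : G) • φ_ref)) - C : ℝ) : EReal) ≤ F x) ↔
      ((∃ σ C : ℝ, 0 < σ ∧ 0 < C ∧ ∀ x : E,
          ((σ * (⨅ g : G, dist x (g • φ_ref)) - C : ℝ) : EReal) ≤ F x) ∧
        CompactSpace (G ⧸ H)) :=
  coercive_mod_subgroup_iff_general hcont hiso hproper φ_ref H F hquasi_fin hquasi hne
end
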